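/- Let Y be a Banach space, C ∈ L(Y), and for each k ∈ ℤ let A(k), B(k) be linear operators in Y such that the composition B(k)[A(k)]^{−1}C =: E(k) is an everywhere-defined bounded operator with ‖E(k)‖ ≤ λ for a fixed λ ∈ (0,1). Let f : ℤ → Y be bounded. Define v(k) := −E(k)f(k) − ∑_{v=1}^{∞} E(k)E(k+1)⋯E(k+v) f(k+v) (absolutely convergent). Then, assuming in addition that each B(k) is injective, the sequence u(k) := [B(k)]^{−1} v(k) (whenever defined) gives a solution of the degenerate equation C B(k+1) u(k+1) = A(k) u(k) + C f(k) in the sense that v(k) = B(k)u(k) satisfies C v(k+1) ∈ A(k)[B(k)]^{−1} v(k) + C f(k) for all k ∈ ℤ. -/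

import Mathlib

/-!
Write `S(k) = ∑_{v ≥ 0} E(k)⋯E(k+v) f(k+v)`; the series converges absolutely since its terms
are bounded by `λ^(v+1) sup ‖f‖`, and the proposed `v(k)` is `-S(k)`. Pulling `E(k)` out of the
series gives `S(k) = E(k) (f(k) + S(k+1))`, so `v(k) = E(k) x` with `x = -f(k) - S(k+1)`.
By the hypothesis on `E(k) = B(k)[A(k)]⁻¹C` there is `z` with `(z, C x) ∈ A(k)` and
`(z, E(k) x) ∈ B(k)`, and `C v(k+1) = -C S(k+1) = C x + C f(k)`.
-/

/-- `fProd E k v = E(k) ∘ E(k+1) ∘ ⋯ ∘ E(k+v)`. -/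
def fProd {Y : Type*} [NormedAddCommGroup Y] [NormedSpace ℂ Y]
    (E : ℤ → Y →L[ℂ] Y) (k : ℤ) : ℕ → (Y →L[ℂ] Y)
  | 0 => E k
  | v + 1 => fProd E k v ∘L E (k + ((v : ℤ) + 1))

section

variable {Y : Type*} [NormedAddCommGroup Y] [NormedSpace ℂ Y] {E : ℤ → Y →L[ℂ] Y}

lemma fProd_succ_left (k : ℤ) (v : ℕ) :
    fProd E k (v + 1) = E k ∘L fProd E (k + 1) v := by
  induction v with
  | zero => simp [fProd]
  | succ v ih =>
    rw [fProd, ih, fProd, ContinuousLinearMap.comp_assoc]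
    congr 3
    push_cast
    ring

lemma norm_fProd_le {lam : ℝ} (hE : ∀ k, ‖E k‖ ≤ lam) (k : ℤ) (n : ℕ) :
    ‖fProd E k n‖ ≤ lam ^ (n + 1) := by
  have hlam : 0 ≤ lam := (norm_nonneg _).trans (hE 0)
  induction n with
  | zero => simpa [fProd] using hE k
  | succ n ih =>
    calc ‖fProd E k (n + 1)‖ ≤ ‖fProd E k n‖ * ‖E (k + ((n : ℤ) + 1))‖ :=
          ContinuousLinearMap.opNorm_comp_le _ _
      _ ≤ lam ^ (n + 1) * lam := mul_le_mul ih (hE _) (norm_nonneg _) (by positivity)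
      _ = lam ^ (n + 1 + 1) := (pow_succ _ _).symm

lemma summable_norm_fProd_apply {lam : ℝ} (hE : ∀ k, ‖E k‖ ≤ lam) (hlam : lam < 1)
    {g : ℕ → Y} {M : ℝ} (hg : ∀ v, ‖g v‖ ≤ M) (k : ℤ) :
    Summable fun v : ℕ => ‖fProd E k v (g v)‖ := by
  have hlam0 : 0 ≤ lam := (norm_nonneg _).trans (hE 0)
  have hM : 0 ≤ M := (norm_nonneg _).trans (hg 0)
  refine .of_nonneg_of_le (fun v => norm_nonneg _) (fun v => ?_)
    ((summable_geometric_of_lt_one hlam0 hlam).mul_right (lam * M))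
  calc ‖fProd E k v (g v)‖ ≤ ‖fProd E k v‖ * M := (fProd E k v).le_opNorm_of_le (hg v)
    _ ≤ lam ^ (v + 1) * M := by gcongr; exact norm_fProd_le hE k v
    _ = lam ^ v * (lam * M) := by ring

noncomputable def fProdSeries (E : ℤ → Y →L[ℂ] Y) (f : ℤ → Y) (k : ℤ) : Y :=
  ∑' v : ℕ, fProd E k v (f (k + v))

variable {f : ℤ → Y} (hs : ∀ k, Summable fun v : ℕ => fProd E k v (f (k + v)))
include hs

lemma tsum_fProd_succ_eq (k : ℤ) :
    ∑' v : ℕ, fProd E k (v + 1) (f (k + ((v : ℤ) + 1))) = E k (fProdSeries E f (k + 1)) := by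
  rw [fProdSeries, ContinuousLinearMap.map_tsum _ (hs (k + 1))]
  refine tsum_congr fun v => ?_
  rw [fProd_succ_left, ← add_assoc, add_right_comm]
  rfl

lemma fProdSeries_eq (k : ℤ) : fProdSeries E f k = E k (f k + fProdSeries E f (k + 1)) := by
  rw [fProdSeries, (hs k).tsum_eq_zero_add, map_add, ← tsum_fProd_succ_eq hs]
  simp [fProd, Nat.cast_add]

lemma neg_sub_tsum_fProd_eq (k : ℤ) :
    -(E k (f k)) - ∑' v : ℕ, fProd E k (v + 1) (f (k + ((v : ℤ) + 1))) = -fProdSeries E f k := by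
  rw [fProdSeries_eq hs k, tsum_fProd_succ_eq hs, map_add]
  abel

end

theorem stmt19_general {Y : Type*} [NormedAddCommGroup Y] [NormedSpace ℂ Y] [CompleteSpace Y]
    (C : Y →L[ℂ] Y) (A B : ℤ → Submodule ℂ (Y × Y))
    (E : ℤ → Y →L[ℂ] Y)
    (hE : ∀ (k : ℤ) (x : Y), ∃ z : Y, ((z, C x) ∈ A k) ∧ ((z, E k x) ∈ B k))
    (lam : ℝ) (hlam1 : lam < 1) (hElam : ∀ k : ℤ, ‖E k‖ ≤ lam)
    (f : ℤ → Y) (hf : ∃ M : ℝ, ∀ k : ℤ, ‖f k‖ ≤ M) :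
    (∀ k : ℤ, Summable (fun v : ℕ => ‖fProd E k (v + 1) (f (k + ((v : ℤ) + 1)))‖)) ∧
    (∀ k : ℤ, ∃ z w : Y,
      ((z, (fun m : ℤ =>
          -(E m (f m)) - ∑' v : ℕ, fProd E m (v + 1) (f (m + ((v : ℤ) + 1)))) k) ∈ B k) ∧
      ((z, w) ∈ A k) ∧
      C ((fun m : ℤ =>
          -(E m (f m)) - ∑' v : ℕ, fProd E m (v + 1) (f (m + ((v : ℤ) + 1)))) (k + 1))
        = w + C (f k)) := by
  obtain ⟨M, hM⟩ := hf
  have hnorm (k : ℤ) : Summable fun v : ℕ => ‖fProd E k v (f (k + v))‖ :=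
    summable_norm_fProd_apply hElam hlam1 (fun _ => hM _) k
  have hs (k : ℤ) := (hnorm k).of_norm
  refine ⟨fun k => ?_, fun k => ?_⟩
  · simpa using (summable_nat_add_iff 1).2 (hnorm k)
  · simp only [neg_sub_tsum_fProd_eq hs]
    set x := -f k - fProdSeries E f (k + 1)
    have hv : -fProdSeries E f k = E k x := by rw [fProdSeries_eq hs, ← map_neg, neg_add']
    obtain ⟨z, hzA, hzB⟩ := hE k x
    refine ⟨z, C x, hv ▸ hzB, hzA, ?_⟩
    rw [← map_add]
    congr 1
    simp only [x]
    abel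

/-- Degenerate equations: let `A(k)`, `B(k)` be (possibly multivalued/unbounded) linear
operators in `Y` given by their graphs, `C ∈ L(Y)`, and suppose
`E(k) = B(k)[A(k)]⁻¹C ∈ L(Y)` with `‖E(k)‖ ≤ λ < 1`, in the sense that for every `x`
there is `z` with `(z, C x) ∈ A(k)` and `(z, E(k) x) ∈ B(k)`; assume moreover each `B(k)`
is injective. If `f` is bounded, then
`v(k) = −E(k) f(k) − ∑_{v=1}^∞ E(k)⋯E(k+v) f(k+v)` (absolutely convergent) satisfies the
inclusion `C v(k+1) ∈ A(k)[B(k)]⁻¹ v(k) + C f(k)` for all `k ∈ ℤ`; that is, `v(k) = B(k)u(k)`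
for a solution `u` of the degenerate equation `C B(k+1)u(k+1) = A(k)u(k) + C f(k)`. -/
theorem stmt19 {Y : Type*} [NormedAddCommGroup Y] [NormedSpace ℂ Y] [CompleteSpace Y]
    (C : Y →L[ℂ] Y) (A B : ℤ → Submodule ℂ (Y × Y))
    (E : ℤ → Y →L[ℂ] Y)
    (hE : ∀ (k : ℤ) (x : Y), ∃ z : Y, ((z, C x) ∈ A k) ∧ ((z, E k x) ∈ B k))
    (hBinj : ∀ (k : ℤ) (z z' w : Y), (z, w) ∈ B k → (z', w) ∈ B k → z = z')
    (lam : ℝ) (hlam0 : 0 < lam) (hlam1 : lam < 1) (hElam : ∀ k : ℤ, ‖E k‖ ≤ lam)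
    (f : ℤ → Y) (hf : ∃ M : ℝ, ∀ k : ℤ, ‖f k‖ ≤ M) :
    (∀ k : ℤ, Summable (fun v : ℕ => ‖fProd E k (v + 1) (f (k + ((v : ℤ) + 1)))‖)) ∧
    (∀ k : ℤ, ∃ z w : Y,
      ((z, (fun m : ℤ =>
          -(E m (f m)) - ∑' v : ℕ, fProd E m (v + 1) (f (m + ((v : ℤ) + 1)))) k) ∈ B k) ∧
      ((z, w) ∈ A k) ∧
      C ((fun m : ℤ =>
          -(E m (f m)) - ∑' v : ℕ, fProd E m (v + 1) (f (m + ((v : ℤ) + 1)))) (k + 1))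
        = w + C (f k)) :=
  stmt19_general C A B E hE lam hlam1 hElam f hf
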